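/- arXiv:1603.04606 — 7 statements merged into one kernel-verified Lean document; each statement's English description precedes it below -/
import Mathlib

section
/- Let 𝔽_q be a finite field with q elements and characteristic p. Let V be a set of n vertices and let E be the edge set of the complete graph K_n on V (all 2-element subsets of V). For every x : E → 𝔽_q and y : V → 𝔽_q, the value ∑_{S ⊆ V} (∏_{e ∈ E : e ∩ S ≠ ∅} x_e^{q-1}) · (∏_{v ∈ S} y_v^{q-1}) equals the cast into 𝔽_q of 2^{|D|}, where D = {v ∈ V : y_v ≠ 0 and x_e ≠ 0 for every edge e ∈ E incident to v}. (In particular, the vertex cover polynomial VC^q_n can be evaluated in polynomial time over 𝔽_q.) -/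
open Finset

theorem stmt2 {F : Type*} [Field F] [Fintype F] [DecidableEq F]
    (q : ℕ) (hq : q = Fintype.card F)
    (n : ℕ) (x : Sym2 (Fin n) → F) (y : Fin n → F) :
    ∑ S : Finset (Fin n),
      (∏ e ∈ univ.filter (fun e : Sym2 (Fin n) => ¬ e.IsDiag ∧ ∃ v ∈ S, v ∈ e),
          x e ^ (q - 1)) *
      (∏ v ∈ S, y v ^ (q - 1))
    = ((2 ^ (univ.filter (fun v : Fin n =>
          y v ≠ 0 ∧ ∀ e : Sym2 (Fin n), ¬ e.IsDiag → v ∈ e → x e ≠ 0)).card : ℕ) : F) := by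
  classical
  set D := univ.filter (fun v : Fin n =>
      y v ≠ 0 ∧ ∀ e : Sym2 (Fin n), ¬ e.IsDiag → v ∈ e → x e ≠ 0) with hD
  have hq1 : q - 1 ≠ 0 := by
    have : 2 ≤ q := hq ▸ Fintype.one_lt_card
    omega
  have key : ∀ S : Finset (Fin n),
      (∏ e ∈ univ.filter (fun e : Sym2 (Fin n) => ¬ e.IsDiag ∧ ∃ v ∈ S, v ∈ e),
          x e ^ (q - 1)) *
      (∏ v ∈ S, y v ^ (q - 1)) = if S ⊆ D then (1 : F) else 0 := by
    intro S
    by_cases h : S ⊆ D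
    · rw [if_pos h]
      have h1 : ∀ e ∈ univ.filter (fun e : Sym2 (Fin n) => ¬ e.IsDiag ∧ ∃ v ∈ S, v ∈ e),
          x e ^ (q - 1) = 1 := by
        intro e he
        simp only [mem_filter, mem_univ, true_and] at he
        obtain ⟨hd, v, hvS, hve⟩ := he
        have hv := h hvS
        rw [hD, mem_filter] at hv
        have hx : x e ≠ 0 := hv.2.2 e hd hve
        rw [hq]; exact FiniteField.pow_card_sub_one_eq_one _ hx
      have h2 : ∀ v ∈ S, y v ^ (q - 1) = 1 := by
        intro v hv
        have hv' := h hv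
        rw [hD, mem_filter] at hv'
        rw [hq]; exact FiniteField.pow_card_sub_one_eq_one _ hv'.2.1
      rw [Finset.prod_congr rfl h1, Finset.prod_congr rfl h2]; simp
    · rw [if_neg h]
      obtain ⟨v, hvS, hvD⟩ := not_subset.mp h
      rw [hD, mem_filter] at hvD
      push_neg at hvD
      by_cases hy : y v = 0
      · have hz : (∏ v ∈ S, y v ^ (q - 1)) = 0 :=
          Finset.prod_eq_zero hvS (by rw [hy, zero_pow hq1])
        rw [hz, mul_zero]
      · obtain ⟨e, hd, hve, hxe⟩ := hvD (by simp) hy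
        have hz : (∏ e ∈ univ.filter (fun e : Sym2 (Fin n) => ¬ e.IsDiag ∧ ∃ v ∈ S, v ∈ e),
            x e ^ (q - 1)) = 0 := by
          refine Finset.prod_eq_zero (i := e) ?_ (by rw [hxe, zero_pow hq1])
          simp only [mem_filter, mem_univ, true_and]
          exact ⟨hd, v, hvS, hve⟩
        rw [hz, zero_mul]
  rw [Finset.sum_congr rfl (fun S _ => key S)]
  rw [Finset.sum_ite, Finset.sum_const_zero, add_zero, Finset.sum_const, nsmul_eq_mul, mul_one]
  have : univ.filter (fun S : Finset (Fin n) => S ⊆ D) = D.powerset := by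
    ext S; simp [mem_powerset]
  rw [this, Finset.card_powerset]
end

section
/- Let 𝔽_q be a finite field with q elements and characteristic p. Let A be a simple graph on a vertex set V of n vertices with m edges. Consider the bivariate polynomial P(z,t) = ∑_{S ⊆ V} z^{(q-1)·c(S)} · t^{(q-1)·|S|} in 𝔽_q[z,t], where c(S) is the number of edges of A having at least one endpoint in S. Then for every k ≤ n, the coefficient of z^{m(q-1)} t^{k(q-1)} in P equals the cast into 𝔽_q of the number of vertex covers of A of size exactly k. -/
open Finset

theorem stmt3 {F : Type*} [Field F] [Fintype F]
    (q : ℕ) (hq : q = Fintype.card F)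
    (n : ℕ) (A : SimpleGraph (Fin n)) [DecidableRel A.Adj]
    (k : ℕ) (hk : k ≤ n) :
    MvPolynomial.coeff
      (Finsupp.single (0 : Fin 2) ((q - 1) * A.edgeFinset.card) +
       Finsupp.single (1 : Fin 2) ((q - 1) * k))
      (∑ S : Finset (Fin n),
        (MvPolynomial.X 0 : MvPolynomial (Fin 2) F) ^
            ((q - 1) * (A.edgeFinset.filter (fun e => ∃ v ∈ S, v ∈ e)).card) *
        (MvPolynomial.X 1 : MvPolynomial (Fin 2) F) ^ ((q - 1) * S.card))
    = ((univ.filter (fun S : Finset (Fin n) =>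
          (∀ e ∈ A.edgeFinset, ∃ v ∈ S, v ∈ e) ∧ S.card = k)).card : F) := by
  have hq1 : 0 < q - 1 := by
    have : 1 < q := hq ▸ Fintype.one_lt_card
    omega
  rw [MvPolynomial.coeff_sum]
  simp only [MvPolynomial.X_pow_eq_monomial, MvPolynomial.monomial_mul, one_mul,
    MvPolynomial.coeff_monomial]
  rw [Finset.sum_boole]
  congr 1
  apply congrArg
  apply Finset.filter_congr
  intro S _

  constructor
  · intro h
    have h0 := DFunLike.congr_fun h 0
    have h1 := DFunLike.congr_fun h 1
    simp [Finsupp.single_apply] at h0 h1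
    have hc : (A.edgeFinset.filter (fun e => ∃ v ∈ S, v ∈ e)).card = A.edgeFinset.card := by
      simpa [SimpleGraph.edgeFinset] using h0.resolve_right (by omega)
    refine ⟨fun e he => ?_, h1.resolve_right (by omega)⟩
    exact (Finset.filter_card_eq hc e he)
  · rintro ⟨hcov, hcard⟩
    rw [Finset.filter_true_of_mem hcov, hcard]
end

section
/- Let 𝔽_q be a finite field with q elements and characteristic p. Let V be a set of n vertices and let E be the edge set of the complete graph K_n on V (all 2-element subsets of V). For every x : E → 𝔽_q and y : V → 𝔽_q, the value ∑_{T ⊆ E} (∏_{e ∈ T} x_e^{q-1}) · (∏_{v incident to some edge of T} y_v^{q-1}) equals the cast into 𝔽_q of 2^{ℓ}, where ℓ = |{e = {u,v} ∈ E : x_e ≠ 0, y_u ≠ 0, and y_v ≠ 0}|. (In particular, the clique/independent set polynomial CIS^q_n can be evaluated in polynomial time over 𝔽_q.) -/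
open Finset

theorem stmt4 {F : Type*} [Field F] [Fintype F] [DecidableEq F]
    (q : ℕ) (hq : q = Fintype.card F)
    (n : ℕ) (x : Sym2 (Fin n) → F) (y : Fin n → F) :
    ∑ T ∈ (univ.filter (fun e : Sym2 (Fin n) => ¬ e.IsDiag)).powerset,
      (∏ e ∈ T, x e ^ (q - 1)) *
      (∏ v ∈ univ.filter (fun v : Fin n => ∃ e ∈ T, v ∈ e), y v ^ (q - 1))
    = ((2 ^ (univ.filter (fun e : Sym2 (Fin n) =>
          ¬ e.IsDiag ∧ x e ≠ 0 ∧ ∀ v ∈ e, y v ≠ 0)).card : ℕ) : F) := by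
  have hq1 : q - 1 ≠ 0 := by
    have : 1 < q := by rw [hq]; exact Fintype.one_lt_card
    omega
  have hpow : ∀ a : F, a ≠ 0 → a ^ (q - 1) = 1 := by
    intro a ha
    subst hq
    exact FiniteField.pow_card_sub_one_eq_one a ha
  set S : Finset (Sym2 (Fin n)) := univ.filter (fun e : Sym2 (Fin n) =>
      ¬ e.IsDiag ∧ x e ≠ 0 ∧ ∀ v ∈ e, y v ≠ 0) with hS
  set E : Finset (Sym2 (Fin n)) := univ.filter (fun e : Sym2 (Fin n) => ¬ e.IsDiag) with hE
  have hSE : S ⊆ E := by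
    intro e he
    simp only [hS, hE, mem_filter, mem_univ, true_and] at he ⊢
    exact he.1
  have key : ∀ T ∈ E.powerset,
      (∏ e ∈ T, x e ^ (q - 1)) *
      (∏ v ∈ univ.filter (fun v : Fin n => ∃ e ∈ T, v ∈ e), y v ^ (q - 1))
      = if T ⊆ S then (1 : F) else 0 := by
    intro T hT
    rw [mem_powerset] at hT
    by_cases h : T ⊆ S
    · rw [if_pos h]
      have h1 : ∏ e ∈ T, x e ^ (q - 1) = 1 := by
        apply prod_eq_one
        intro e he
        have := h he
        simp only [hS, mem_filter] at this
        exact hpow _ this.2.2.1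
      have h2 : ∏ v ∈ univ.filter (fun v : Fin n => ∃ e ∈ T, v ∈ e), y v ^ (q - 1) = 1 := by
        apply prod_eq_one
        intro v hv
        simp only [mem_filter, mem_univ, true_and] at hv
        obtain ⟨e, heT, hve⟩ := hv
        have := h heT
        simp only [hS, mem_filter] at this
        exact hpow _ (this.2.2.2 v hve)
      rw [h1, h2, one_mul]
    · rw [if_neg h]
      rw [Finset.not_subset] at h
      obtain ⟨e, heT, heS⟩ := h
      have hed : ¬ e.IsDiag := by
        have := hT heT
        simpa [hE] using this
      simp only [hS, mem_filter, mem_univ, true_and, not_and, not_forall] at heS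
      rcases Classical.em (x e = 0) with hx | hx
      · have : ∏ e ∈ T, x e ^ (q - 1) = 0 :=
          prod_eq_zero heT (by rw [hx]; exact zero_pow hq1)
        rw [this, zero_mul]
      · obtain ⟨v, hve, hyv⟩ := by
          have := heS hed hx
          push_neg at this
          exact this
        have hyv0 : y v = 0 := hyv
        have hvmem : v ∈ univ.filter (fun v : Fin n => ∃ e ∈ T, v ∈ e) := by
          simp only [mem_filter, mem_univ, true_and]
          exact ⟨e, heT, hve⟩
        have : ∏ v ∈ univ.filter (fun v : Fin n => ∃ e ∈ T, v ∈ e), y v ^ (q - 1) = 0 :=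
          prod_eq_zero hvmem (by rw [hyv0]; exact zero_pow hq1)
        rw [this, mul_zero]
  rw [Finset.sum_congr rfl key, Finset.sum_boole]
  have hfilter : E.powerset.filter (fun T => T ⊆ S) = S.powerset := by
    ext T
    simp only [mem_filter, mem_powerset]
    exact ⟨fun h => h.2, fun h => ⟨h.trans hSE, h⟩⟩
  rw [hfilter]
  simp [card_powerset]
end

section
/- Let 𝔽_q be a finite field with q elements and characteristic p. Let A be a simple graph on a vertex set V of n vertices, and let E be the edge set of the complete graph K_n on V. Consider the bivariate polynomial P(z,t) = ∑_{T ⊆ E} z^{(q-1)·|T ∩ E(A)|} · t^{(q-1)·v(T)} in 𝔽_q[z,t], where v(T) is the number of vertices incident to at least one edge of T. Then for every k with 2 ≤ k ≤ n, the coefficient of z^{(q-1)·k(k-1)/2} t^{(q-1)·k} in P equals the cast into 𝔽_q of the number of k-cliques of A, i.e., of k-element subsets of V whose vertices are pairwise adjacent in A. -/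
open Finset

section aux
variable {n : ℕ}

def cliqueEdges (S : Finset (Fin n)) : Finset (Sym2 (Fin n)) :=
  S.sym2.filter (fun e => ¬ e.IsDiag)

lemma mem_cliqueEdges {S : Finset (Fin n)} {e : Sym2 (Fin n)} :
    e ∈ cliqueEdges S ↔ (∀ a ∈ e, a ∈ S) ∧ ¬ e.IsDiag := by
  simp [cliqueEdges, Finset.mem_sym2_iff]

lemma card_cliqueEdges (S : Finset (Fin n)) : (cliqueEdges S).card = S.card.choose 2 := by
  have h1 : S.sym2.filter (fun e => e.IsDiag) = S.image Sym2.diag := by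
    ext e
    induction e using Sym2.inductionOn with
    | hf x y =>
      simp only [mem_filter, Finset.mk_mem_sym2_iff, mem_image, Sym2.isDiag_iff_proj_eq]
      constructor
      · rintro ⟨⟨hx, hy⟩, h⟩
        exact ⟨x, hx, by simp [Sym2.diag, h]⟩
      · rintro ⟨a, ha, h⟩
        rw [Sym2.diag] at h
        rcases Sym2.eq_iff.mp h with ⟨rfl, rfl⟩ | ⟨rfl, rfl⟩ <;> exact ⟨⟨ha, ha⟩, rfl⟩
  have h2 := Finset.card_filter_add_card_filter_not
    (s := S.sym2) (p := fun e => e.IsDiag)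
  rw [h1, Finset.card_image_of_injective _ Sym2.diag_injective, Finset.card_sym2] at h2
  have h3 : (S.card + 1).choose 2 = S.card + S.card.choose 2 := by
    rw [Nat.choose_succ_succ, Nat.choose_one_right]
  have : (cliqueEdges S).card = (S.sym2.filter (fun e => ¬ e.IsDiag)).card := rfl
  omega

end aux

theorem stmt5 {F : Type*} [Field F] [Fintype F]
    (q : ℕ) (hq : q = Fintype.card F)
    (n : ℕ) (A : SimpleGraph (Fin n)) [DecidableRel A.Adj]
    (k : ℕ) (hk2 : 2 ≤ k) (hkn : k ≤ n) :
    MvPolynomial.coeff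
      (Finsupp.single (0 : Fin 2) ((q - 1) * (k * (k - 1) / 2)) +
       Finsupp.single (1 : Fin 2) ((q - 1) * k))
      (∑ T ∈ (univ.filter (fun e : Sym2 (Fin n) => ¬ e.IsDiag)).powerset,
        (MvPolynomial.X 0 : MvPolynomial (Fin 2) F) ^
            ((q - 1) * (T ∩ A.edgeFinset).card) *
        (MvPolynomial.X 1 : MvPolynomial (Fin 2) F) ^
            ((q - 1) * (univ.filter (fun v : Fin n => ∃ e ∈ T, v ∈ e)).card))
    = ((univ.filter (fun S : Finset (Fin n) =>
          S.card = k ∧ ∀ u ∈ S, ∀ v ∈ S, u ≠ v → A.Adj u v)).card : F) := by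
  have hq2 : 1 < q := hq ▸ Fintype.one_lt_card
  have hq1 : 0 < q - 1 := by omega
  have hKk : k * (k - 1) / 2 = k.choose 2 := (Nat.choose_two_right k).symm
  set K := k * (k - 1) / 2 with hK
  -- finsupp equality lemma
  have hsingle : ∀ a b c d : ℕ,
      (Finsupp.single (0 : Fin 2) a + Finsupp.single 1 b =
       Finsupp.single (0 : Fin 2) c + Finsupp.single 1 d) ↔ (a = c ∧ b = d) := by
    intro a b c d
    constructor
    · intro h
      have h0 := DFunLike.congr_fun h 0
      have h1 := DFunLike.congr_fun h 1
      simp [Finsupp.single_apply] at h0 h1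
      exact ⟨h0, h1⟩
    · rintro ⟨rfl, rfl⟩; rfl
  -- step 1: coefficient equals a cardinality
  rw [MvPolynomial.coeff_sum]
  have hterm : ∀ T ∈ (univ.filter (fun e : Sym2 (Fin n) => ¬ e.IsDiag)).powerset,
      MvPolynomial.coeff
        (Finsupp.single (0 : Fin 2) ((q - 1) * K) + Finsupp.single 1 ((q - 1) * k))
        ((MvPolynomial.X 0 : MvPolynomial (Fin 2) F) ^ ((q - 1) * (T ∩ A.edgeFinset).card) *
         (MvPolynomial.X 1 : MvPolynomial (Fin 2) F) ^
           ((q - 1) * (univ.filter (fun v : Fin n => ∃ e ∈ T, v ∈ e)).card)) =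
      if (T ∩ A.edgeFinset).card = K ∧
          (univ.filter (fun v : Fin n => ∃ e ∈ T, v ∈ e)).card = k then (1 : F) else 0 := by
    intro T _
    rw [MvPolynomial.X_pow_eq_monomial, MvPolynomial.X_pow_eq_monomial,
      MvPolynomial.monomial_mul, MvPolynomial.coeff_monomial, one_mul]
    congr 1
    rw [eq_iff_iff, hsingle]
    constructor
    · rintro ⟨h1, h2⟩
      exact ⟨Nat.eq_of_mul_eq_mul_left hq1 h1, Nat.eq_of_mul_eq_mul_left hq1 h2⟩
    · rintro ⟨h1, h2⟩; rw [h1, h2]; exact ⟨rfl, rfl⟩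
  rw [Finset.sum_congr rfl hterm, Finset.sum_boole]
  congr 1
  -- step 2: bijection
  refine Finset.card_bij
    (fun T _ => univ.filter (fun v : Fin n => ∃ e ∈ T, v ∈ e)) ?_ ?_ ?_
  ·
    intro T hT
    simp only [mem_filter, mem_powerset, mem_univ, true_and] at hT ⊢
    obtain ⟨hTE, hcard, hvert⟩ := hT
    -- key structure
    have hsub : T ⊆ cliqueEdges (univ.filter (fun v : Fin n => ∃ e ∈ T, v ∈ e)) := by
      intro e he
      rw [mem_cliqueEdges]
      refine ⟨fun a ha => ?_, ?_⟩
      · simp only [mem_filter, mem_univ, true_and]; exact ⟨e, he, ha⟩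
      · have := hTE he; simpa using this
    have hce : (cliqueEdges (univ.filter (fun v : Fin n => ∃ e ∈ T, v ∈ e))).card = k.choose 2 := by
      rw [card_cliqueEdges, hvert]
    have hTA : (T ∩ A.edgeFinset).card ≤ T.card := Finset.card_le_card Finset.inter_subset_left
    have hTle : T.card ≤ k.choose 2 := hce ▸ Finset.card_le_card hsub
    have hTcard : T.card = k.choose 2 := by omega
    have hTeq : T = cliqueEdges (univ.filter (fun v : Fin n => ∃ e ∈ T, v ∈ e)) :=
      Finset.eq_of_subset_of_card_le hsub (by omega)
    have hTA' : T ⊆ A.edgeFinset := by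
      rw [← Finset.inter_eq_left]
      exact Finset.eq_of_subset_of_card_le Finset.inter_subset_left (by omega)
    refine ⟨hvert, fun u hu v hv huv => ?_⟩
    have : s(u, v) ∈ cliqueEdges (univ.filter (fun v : Fin n => ∃ e ∈ T, v ∈ e)) := by
      rw [mem_cliqueEdges]
      refine ⟨?_, by simp [huv]⟩
      intro a ha
      rw [Sym2.mem_iff] at ha
      simp only [mem_filter, mem_univ, true_and]
      rcases ha with rfl | rfl
      · exact hu
      · exact hv
    rw [← hTeq] at this
    have := hTA' this
    rwa [SimpleGraph.mem_edgeFinset, SimpleGraph.mem_edgeSet] at this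
  ·
    intro T hT T' hT' h
    simp only [mem_filter, mem_powerset, mem_univ, true_and] at hT hT'
    obtain ⟨hTE, hcard, hvert⟩ := hT
    obtain ⟨hTE', hcard', hvert'⟩ := hT'
    -- reuse structure: T = cliqueEdges (V T)
    have key : ∀ (S : Finset (Sym2 (Fin n))),
        (S ⊆ univ.filter (fun e : Sym2 (Fin n) => ¬ e.IsDiag)) →
        (S ∩ A.edgeFinset).card = K →
        (univ.filter (fun v : Fin n => ∃ e ∈ S, v ∈ e)).card = k →
        S = cliqueEdges (univ.filter (fun v : Fin n => ∃ e ∈ S, v ∈ e)) := by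
      intro S hSE hScard hSvert
      have hsub : S ⊆ cliqueEdges (univ.filter (fun v : Fin n => ∃ e ∈ S, v ∈ e)) := by
        intro e he
        rw [mem_cliqueEdges]
        refine ⟨fun a ha => ?_, ?_⟩
        · simp only [mem_filter, mem_univ, true_and]; exact ⟨e, he, ha⟩
        · have := hSE he; simpa using this
      have hce : (cliqueEdges (univ.filter (fun v : Fin n => ∃ e ∈ S, v ∈ e))).card
          = k.choose 2 := by rw [card_cliqueEdges, hSvert]
      have hSA : (S ∩ A.edgeFinset).card ≤ S.card := Finset.card_le_card Finset.inter_subset_left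
      have hSle : S.card ≤ k.choose 2 := hce ▸ Finset.card_le_card hsub
      exact Finset.eq_of_subset_of_card_le hsub (by omega)
    rw [key T hTE hcard hvert, key T' hTE' hcard' hvert']
    exact congrArg cliqueEdges h
  ·
    intro S hS
    simp only [mem_filter, mem_univ, true_and] at hS
    obtain ⟨hScard, hSclique⟩ := hS
    refine ⟨cliqueEdges S, ?_, ?_⟩
    · -- membership in filtered powerset
      have hVT : univ.filter (fun v : Fin n => ∃ e ∈ cliqueEdges S, v ∈ e) = S := by
        ext v
        simp only [mem_filter, mem_univ, true_and]
        constructor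
        · rintro ⟨e, he, hv⟩
          exact (mem_cliqueEdges.mp he).1 v hv
        · intro hv
          obtain ⟨u, hu, huv⟩ := Finset.exists_mem_ne (s := S) (by omega) v
          refine ⟨s(u, v), ?_, by simp⟩
          rw [mem_cliqueEdges]
          refine ⟨?_, by simp [huv]⟩
          intro a ha
          rw [Sym2.mem_iff] at ha
          rcases ha with rfl | rfl
          · exact hu
          · exact hv
      have hCA : cliqueEdges S ⊆ A.edgeFinset := by
        intro e he
        rw [mem_cliqueEdges] at he
        obtain ⟨hmem, hdiag⟩ := he
        induction e using Sym2.inductionOn with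
        | hf x y =>
          rw [SimpleGraph.mem_edgeFinset, SimpleGraph.mem_edgeSet]
          have hx : x ∈ S := hmem x (by simp)
          have hy : y ∈ S := hmem y (by simp)
          have hxy : x ≠ y := by simpa [Sym2.isDiag_iff_proj_eq] using hdiag
          exact hSclique x hx y hy hxy
      simp only [mem_filter, mem_powerset, mem_univ, true_and]
      refine ⟨?_, ?_, ?_⟩
      · intro e he
        simp only [mem_filter, mem_univ, true_and]
        exact (mem_cliqueEdges.mp he).2
      · rw [Finset.inter_eq_left.mpr hCA, card_cliqueEdges, hScard, hK, Nat.choose_two_right]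
      · rw [hVT, hScard]
    · ext v
      simp only [mem_filter, mem_univ, true_and]
      constructor
      · rintro ⟨e, he, hv⟩
        exact (mem_cliqueEdges.mp he).1 v hv
      · intro hv
        obtain ⟨u, hu, huv⟩ := Finset.exists_mem_ne (s := S) (by omega) v
        refine ⟨s(u, v), ?_, by simp⟩
        rw [mem_cliqueEdges]
        refine ⟨?_, by simp [huv]⟩
        intro a ha
        rw [Sym2.mem_iff] at ha
        rcases ha with rfl | rfl
        · exact hu
        · exact hv
end

section
/- Let G be a simple graph on vertex set {1,…,n} with n ≥ 2, and let A be its adjacency matrix over ℕ. For each j, let A_j be the n×n matrix whose (u,v) entry equals A_{u,v} if both u ≥ j and v ≥ j, and 0 otherwise. Then for every vertex i, the number of clows of length n in G with head i equals the (i,i) entry of the matrix product A_i · A_{i+1}^{n-2} · A_i. -/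
/-!
Expanding the matrix product, `(A_i A_{i+1}^{n-2} A_i)_{ii}` is a sum over closed walks
`i = w 0, w 1, …, w (n-1), w 0` of the product of the factors' entries along the steps. Each
entry is the indicator of an edge whose endpoints lie at or above the factor's threshold, and the
thresholds `i` at the two end steps and `i + 1` at the inner steps say precisely that every
vertex other than the head exceeds `i`.
-/

open Finset

/-- The `n × n` matrix over `ℕ` whose `(u,v)` entry is the `(u,v)` entry of the
adjacency matrix of `G` if both `u ≥ j` and `v ≥ j`, and `0` otherwise. -/
def restrictMat {n : ℕ} (G : SimpleGraph (Fin n)) [DecidableRel G.Adj] (j : ℕ) :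
    Matrix (Fin n) (Fin n) ℕ :=
  Matrix.of fun u v => if j ≤ (u : ℕ) ∧ j ≤ (v : ℕ) then G.adjMatrix ℕ u v else 0

theorem Fin.cons_add_one_eq_snoc {α : Type*} {m : ℕ} (a : α) (p : Fin m → α) (k : Fin (m + 1)) :
    (Fin.cons a p : Fin (m + 1) → α) (k + 1) = (Fin.snoc p a : Fin (m + 1) → α) k := by
  induction k using Fin.lastCases with
  | last => simp [Fin.last_add_one]
  | cast j => simp [Fin.coeSucc_eq_succ]

theorem Fin.sum_univ_pi_succ {α β : Type*} [Fintype α] [AddCommMonoid β] {m : ℕ}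
    (f : (Fin (m + 1) → α) → β) : ∑ q, f q = ∑ c, ∑ p : Fin m → α, f (Fin.cons c p) := by
  rw [← (Fin.consEquiv fun _ => α).sum_comp, Fintype.sum_prod_type]
  rfl

namespace Matrix

variable {V R : Type*} [Fintype V] [DecidableEq V] [CommSemiring R]

theorem list_prod_ofFn_apply {m : ℕ} (N : Fin (m + 1) → Matrix V V R) (a b : V) :
    (List.ofFn N).prod a b = ∑ p : Fin m → V,
      ∏ k, N k ((Fin.cons a p : Fin (m + 1) → V) k) ((Fin.snoc p b : Fin (m + 1) → V) k) := by
  induction m generalizing a with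
  | zero => simp [Fin.snoc_zero]
  | succ m ih =>
    rw [List.ofFn_succ, List.prod_cons, mul_apply, Fin.sum_univ_pi_succ]
    refine sum_congr rfl fun c _ => ?_
    simp only [ih, mul_sum, Fin.prod_univ_succ, ← Fin.cons_snoc_eq_snoc_cons, Fin.cons_zero,
      Fin.cons_succ]

theorem list_prod_ofFn_apply_self {m : ℕ} (N : Fin (m + 1) → Matrix V V R) (a : V) :
    (List.ofFn N).prod a a =
      ∑ w ∈ univ.filter (fun w : Fin (m + 1) → V => w 0 = a), ∏ k, N k (w k) (w (k + 1)) := by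
  rw [list_prod_ofFn_apply, sum_filter, Fin.sum_univ_pi_succ]
  simp only [Fin.cons_zero, sum_ite_irrel, sum_const_zero, sum_ite_eq', mem_univ, if_true,
    Fin.cons_add_one_eq_snoc]

end Matrix

/-- The index `j` of the factor `A_j` of `A_i A_{i+1}^m A_i` that carries step `k` of a
closed walk of length `m + 2`. -/
def clowThreshold (i m : ℕ) (k : Fin (m + 2)) : ℕ :=
  if k = 0 ∨ k = Fin.last (m + 1) then i else i + 1

theorem restrictMat_apply {n : ℕ} (G : SimpleGraph (Fin n)) [DecidableRel G.Adj] (j : ℕ)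
    (u v : Fin n) :
    restrictMat G j u v = if (j ≤ (u : ℕ) ∧ j ≤ (v : ℕ)) ∧ G.Adj u v then 1 else 0 := by
  simp only [restrictMat, Matrix.of_apply, SimpleGraph.adjMatrix_apply, ite_and]

theorem list_prod_ofFn_restrictMat_clowThreshold {n : ℕ} (G : SimpleGraph (Fin n))
    [DecidableRel G.Adj] (i m : ℕ) :
    (List.ofFn fun k => restrictMat G (clowThreshold i m k)).prod =
      restrictMat G i * restrictMat G (i + 1) ^ m * restrictMat G i := by
  rw [List.ofFn_succ, List.ofFn_succ', List.prod_cons, List.prod_concat]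
  simp [clowThreshold, Fin.succ_ne_zero, List.ofFn_const, Matrix.mul_assoc]

theorem clow_iff_forall_clowThreshold {n m : ℕ} (G : SimpleGraph (Fin n))
    (w : Fin (m + 2) → Fin n) :
    ((∀ k, G.Adj (w k) (w (k + 1))) ∧ ∀ j, j ≠ 0 → w 0 < w j) ↔
      ∀ k, (clowThreshold (w 0) m k ≤ (w k : ℕ) ∧ clowThreshold (w 0) m k ≤ (w (k + 1) : ℕ)) ∧
        G.Adj (w k) (w (k + 1)) := by
  have threshold_le (k : Fin (m + 2)) : clowThreshold (w 0) m k ≤ w 0 + 1 := by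
    unfold clowThreshold; split_ifs <;> omega
  constructor
  · rintro ⟨hadj, hmin⟩
    have above_head (j : Fin (m + 2)) (hj : j ≠ 0) : (w 0 : ℕ) + 1 ≤ w j := hmin j hj
    refine fun k => ⟨⟨?_, ?_⟩, hadj k⟩
    · by_cases hk : k = 0
      · simp [hk, clowThreshold]
      · exact (threshold_le k).trans (above_head k hk)
    · induction k using Fin.lastCases with
      | last => simp [Fin.last_add_one, clowThreshold]
      | cast j =>
        rw [Fin.coeSucc_eq_succ]
        exact (threshold_le _).trans (above_head _ j.succ_ne_zero)
  · intro h
    refine ⟨fun k => (h k).2, fun j hj => ?_⟩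
    obtain ⟨⟨hwj, -⟩, hadj⟩ := h j
    by_cases hl : j = Fin.last (m + 1)
    · subst hl
      rw [Fin.last_add_one] at hadj
      simp only [clowThreshold, or_true, if_true] at hwj
      exact lt_of_le_of_ne hwj hadj.ne.symm
    · simpa [clowThreshold, hj, hl] using hwj

theorem stmt7 (n : ℕ) (hn : 2 ≤ n) [NeZero n]
    (G : SimpleGraph (Fin n)) [DecidableRel G.Adj] (i : Fin n) :
    (univ.filter (fun w : Fin n → Fin n =>
        (∀ k : Fin n, G.Adj (w k) (w (k + 1))) ∧
        (∀ j : Fin n, j ≠ 0 → w 0 < w j) ∧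
        w 0 = i)).card
    = (restrictMat G (i : ℕ) * restrictMat G ((i : ℕ) + 1) ^ (n - 2) *
        restrictMat G (i : ℕ)) i i := by
  obtain ⟨m, rfl⟩ : ∃ m, n = m + 2 := ⟨n - 2, by omega⟩
  rw [Nat.add_sub_cancel, ← list_prod_ofFn_restrictMat_clowThreshold,
    Matrix.list_prod_ofFn_apply_self, card_filter, sum_filter]
  refine sum_congr rfl fun w _ => ?_
  by_cases hw : w 0 = i
  · subst hw
    simp only [restrictMat_apply, Fintype.prod_boole, and_true, ↓reduceIte]
    congr 1
    exact propext (clow_iff_forall_clowThreshold G w)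
  · simp [hw]
end

section
/- Let 𝔽_q be a finite field with q elements and characteristic p. Let A be a simple graph on vertex set {1,…,n} with n ≥ 3. Consider the bivariate polynomial P(z,t) = ∑_{w clow of length n in K_n} z^{(q-1)·a(w)} · t^{(q-1)·b(w)} in 𝔽_q[z,t], where a(w) is the number of steps of w (counted with multiplicity) that traverse an edge of A and b(w) is the number of distinct vertices visited by w. Then the coefficient of z^{n(q-1)} t^{n(q-1)} in P equals the cast into 𝔽_q of the number of sequences (v_0, v_1, …, v_{n-1}) listing all n vertices without repetition, with v_0 = 1 (the minimum vertex), such that consecutive vertices, and also v_{n-1} and v_0, are adjacent in A; i.e., the number of Hamiltonian cycle traversals of A rooted at the minimum vertex, modulo p. -/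
open Finset

/-- A clow of length `n` in the complete graph on vertex set `Fin n`: a sequence
`w 0, w 1, …, w (n-1)` with consecutive vertices distinct (cyclically, so also
`w (n-1) ≠ w 0`), in which the head `w 0` is strictly smaller than every other
vertex of the sequence (so the minimum vertex appears exactly once). -/
def IsClow (n : ℕ) [NeZero n] (w : Fin n → Fin n) : Prop :=
  (∀ i : Fin n, w i ≠ w (i + 1)) ∧ (∀ j : Fin n, j ≠ 0 → w 0 < w j)

instance (n : ℕ) [NeZero n] (w : Fin n → Fin n) : Decidable (IsClow n w) :=
  inferInstanceAs (Decidable (_ ∧ _))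

lemma single_add_single_eq {e f E E' : ℕ} :
    (Finsupp.single (0 : Fin 2) e + Finsupp.single (1 : Fin 2) f =
     Finsupp.single (0 : Fin 2) E + Finsupp.single (1 : Fin 2) E') ↔ e = E ∧ f = E' := by
  constructor
  · intro h
    have h0 := DFunLike.congr_fun h 0
    have h1 := DFunLike.congr_fun h 1
    simp [Finsupp.single_apply] at h0 h1
    exact ⟨h0, h1⟩
  · rintro ⟨rfl, rfl⟩; rfl


theorem stmt8 {F : Type*} [Field F] [Fintype F]
    (q : ℕ) (hq : q = Fintype.card F)
    (n : ℕ) (hn : 3 ≤ n) [NeZero n]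
    (A : SimpleGraph (Fin n)) [DecidableRel A.Adj] :
    MvPolynomial.coeff
      (Finsupp.single (0 : Fin 2) ((q - 1) * n) +
       Finsupp.single (1 : Fin 2) ((q - 1) * n))
      (∑ w ∈ univ.filter (fun w : Fin n → Fin n => IsClow n w),
        (MvPolynomial.X 0 : MvPolynomial (Fin 2) F) ^
            ((q - 1) * (univ.filter (fun i : Fin n => A.Adj (w i) (w (i + 1)))).card) *
        (MvPolynomial.X 1 : MvPolynomial (Fin 2) F) ^
            ((q - 1) * (Finset.image w univ).card))
    = ((univ.filter (fun w : Fin n → Fin n =>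
          Function.Bijective w ∧ w 0 = 0 ∧
          ∀ i : Fin n, A.Adj (w i) (w (i + 1)))).card : F) := by
  classical
  have hq2 : 1 < q := hq ▸ Fintype.one_lt_card
  have hq1 : 0 < q - 1 := by omega
  rw [MvPolynomial.coeff_sum]
  have hterm : ∀ w : Fin n → Fin n,
      MvPolynomial.coeff
        (Finsupp.single (0 : Fin 2) ((q - 1) * n) +
         Finsupp.single (1 : Fin 2) ((q - 1) * n))
        ((MvPolynomial.X 0 : MvPolynomial (Fin 2) F) ^
            ((q - 1) * (univ.filter (fun i : Fin n => A.Adj (w i) (w (i + 1)))).card) *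
         (MvPolynomial.X 1 : MvPolynomial (Fin 2) F) ^
            ((q - 1) * (Finset.image w univ).card))
      = if ((univ.filter (fun i : Fin n => A.Adj (w i) (w (i + 1)))).card = n
            ∧ (Finset.image w univ).card = n) then 1 else 0 := by
    intro w
    rw [MvPolynomial.X_pow_eq_monomial, MvPolynomial.X_pow_eq_monomial,
      MvPolynomial.monomial_mul, MvPolynomial.coeff_monomial]
    rw [one_mul]
    congr 1
    apply propext
    rw [eq_comm (b := Finsupp.single (0 : Fin 2) ((q-1)*n) + Finsupp.single (1 : Fin 2) ((q-1)*n)), single_add_single_eq]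
    constructor
    · rintro ⟨h1, h2⟩
      exact ⟨(Nat.eq_of_mul_eq_mul_left hq1 h1).symm,
        (Nat.eq_of_mul_eq_mul_left hq1 h2).symm⟩
    · rintro ⟨h1, h2⟩; rw [h1, h2]; exact ⟨rfl, rfl⟩
  simp only [hterm]
  rw [Finset.sum_boole, Finset.filter_filter]
  congr 2
  apply Finset.filter_congr
  intro w _
  have hb : (Finset.image w univ).card = n ↔ Function.Bijective w := by
    constructor
    · intro h
      rw [← Finite.surjective_iff_bijective]
      intro y
      have hu : Finset.image w univ = univ :=
        Finset.eq_univ_of_card _ (by rw [h, Fintype.card_fin])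
      have : y ∈ Finset.image w univ := by rw [hu]; exact Finset.mem_univ y
      obtain ⟨x, _, hx⟩ := Finset.mem_image.mp this
      exact ⟨x, hx⟩
    · intro h
      have hu : Finset.image w univ = univ := Finset.eq_univ_of_forall fun y => by
        obtain ⟨x, hx⟩ := h.surjective y
        exact Finset.mem_image.mpr ⟨x, Finset.mem_univ x, hx⟩
      rw [hu, Finset.card_univ, Fintype.card_fin]
  have ha : (univ.filter (fun i : Fin n => A.Adj (w i) (w (i + 1)))).card = n ↔
      ∀ i : Fin n, A.Adj (w i) (w (i + 1)) := by
    constructor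
    · intro h i
      have hu : univ.filter (fun i : Fin n => A.Adj (w i) (w (i + 1))) = univ :=
        Finset.eq_univ_of_card _ (by rw [h, Fintype.card_fin])
      have : i ∈ univ.filter (fun i : Fin n => A.Adj (w i) (w (i + 1))) := by
        rw [hu]; exact Finset.mem_univ i
      exact (Finset.mem_filter.mp this).2
    · intro h
      rw [Finset.filter_true_of_mem (fun i _ => h i), Finset.card_univ, Fintype.card_fin]
  simp only [ha, hb]
  constructor
  · rintro ⟨hc, hadj, hbij⟩
    refine ⟨hbij, ?_, hadj⟩
    obtain ⟨j, hj⟩ := hbij.surjective 0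
    by_cases hj0 : j = 0
    · subst hj0; exact hj
    · have hlt := hc.2 j hj0
      rw [hj] at hlt
      exact absurd hlt (by simp)
  · rintro ⟨hbij, h0, hadj⟩
    refine ⟨⟨fun i => (A.ne_of_adj (hadj i)), fun j hj => ?_⟩, hadj, hbij⟩
    rw [h0]
    have hne : w j ≠ 0 := fun h => hj (hbij.injective (h.trans h0.symm))
    exact lt_of_le_of_ne (Fin.zero_le (w j)) (Ne.symm hne)
end

section
/- Let 𝔽_q be a finite field with q elements and characteristic p. Let the vertex set be the disjoint union of three copies A_n, B_n, C_n of {1,…,n}, and let the hyperedge set be E = A_n × B_n × C_n. For every x : E → 𝔽_q and y : A_n ⊎ B_n ⊎ C_n → 𝔽_q, the value ∑_{M ⊆ E} (∏_{e ∈ M} x_e^{q-1}) · (∏_{v incident to some hyperedge of M} y_v^{q-1}) equals the cast into 𝔽_q of 2^{ℓ}, where ℓ = |{(a,b,c) ∈ E : x_{(a,b,c)} ≠ 0, y_a ≠ 0, y_b ≠ 0, and y_c ≠ 0}|. (In particular, the 3D-matching polynomial 3DM^q_n can be evaluated in polynomial time over 𝔽_q.) -/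
open Finset

theorem stmt9 {F : Type*} [Field F] [Fintype F] [DecidableEq F]
    (q : ℕ) (hq : q = Fintype.card F) (n : ℕ)
    (x : Fin n × Fin n × Fin n → F) (y : Fin n ⊕ (Fin n ⊕ Fin n) → F) :
    ∑ M : Finset (Fin n × Fin n × Fin n),
      (∏ e ∈ M, x e ^ (q - 1)) *
      (∏ v ∈ univ.filter (fun v : Fin n ⊕ (Fin n ⊕ Fin n) =>
          ∃ e ∈ M, v = Sum.inl e.1 ∨ v = Sum.inr (Sum.inl e.2.1) ∨
            v = Sum.inr (Sum.inr e.2.2)),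
        y v ^ (q - 1))
    = ((2 ^ (univ.filter (fun e : Fin n × Fin n × Fin n =>
          x e ≠ 0 ∧ y (Sum.inl e.1) ≠ 0 ∧ y (Sum.inr (Sum.inl e.2.1)) ≠ 0 ∧
            y (Sum.inr (Sum.inr e.2.2)) ≠ 0)).card : ℕ) : F) := by
  have hq2 : 1 < q := hq ▸ Fintype.one_lt_card
  have hpow : ∀ a : F, a ^ (q - 1) = if a = 0 then 0 else 1 := by
    intro a
    by_cases h : a = 0
    · simp [h, zero_pow, Nat.sub_ne_zero_of_lt hq2]
    · simp [h, hq, FiniteField.pow_card_sub_one_eq_one a h]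
  set S := univ.filter (fun e : Fin n × Fin n × Fin n =>
          x e ≠ 0 ∧ y (Sum.inl e.1) ≠ 0 ∧ y (Sum.inr (Sum.inl e.2.1)) ≠ 0 ∧
            y (Sum.inr (Sum.inr e.2.2)) ≠ 0) with hS
  have hSmem : ∀ e, e ∈ S ↔ (x e ≠ 0 ∧ y (Sum.inl e.1) ≠ 0 ∧
      y (Sum.inr (Sum.inl e.2.1)) ≠ 0 ∧ y (Sum.inr (Sum.inr e.2.2)) ≠ 0) := by
    intro e; simp [hS]
  have key : ∀ M : Finset (Fin n × Fin n × Fin n),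
      (∏ e ∈ M, x e ^ (q - 1)) *
      (∏ v ∈ univ.filter (fun v : Fin n ⊕ (Fin n ⊕ Fin n) =>
          ∃ e ∈ M, v = Sum.inl e.1 ∨ v = Sum.inr (Sum.inl e.2.1) ∨
            v = Sum.inr (Sum.inr e.2.2)),
        y v ^ (q - 1)) = if M ⊆ S then (1 : F) else 0 := by
    intro M
    by_cases hM : M ⊆ S
    · rw [if_pos hM]
      have h1 : (∏ e ∈ M, x e ^ (q - 1)) = 1 := by
        refine Finset.prod_eq_one fun e he => ?_
        rw [hpow, if_neg ((hSmem e).mp (hM he)).1]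
      have h2 : (∏ v ∈ univ.filter (fun v : Fin n ⊕ (Fin n ⊕ Fin n) =>
          ∃ e ∈ M, v = Sum.inl e.1 ∨ v = Sum.inr (Sum.inl e.2.1) ∨
            v = Sum.inr (Sum.inr e.2.2)), y v ^ (q - 1)) = 1 := by
        refine Finset.prod_eq_one fun v hv => ?_
        simp only [mem_filter, mem_univ, true_and] at hv
        obtain ⟨e, he, hcase⟩ := hv
        obtain ⟨-, h1, h2, h3⟩ := (hSmem e).mp (hM he)
        rcases hcase with h | h | h <;> rw [h, hpow] <;>
          simp [h1, h2, h3]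
      rw [h1, h2, one_mul]
    · rw [if_neg hM]
      obtain ⟨e, heM, heS⟩ := Finset.not_subset.mp hM
      by_cases hx : x e = 0
      · rw [Finset.prod_eq_zero heM (by rw [hpow, if_pos hx]), zero_mul]
      · have hy : y (Sum.inl e.1) = 0 ∨ y (Sum.inr (Sum.inl e.2.1)) = 0 ∨
            y (Sum.inr (Sum.inr e.2.2)) = 0 := by
          by_contra h
          push_neg at h
          exact heS ((hSmem e).mpr ⟨hx, h.1, h.2.1, h.2.2⟩)
        have : ∃ v ∈ univ.filter (fun v : Fin n ⊕ (Fin n ⊕ Fin n) =>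
            ∃ e ∈ M, v = Sum.inl e.1 ∨ v = Sum.inr (Sum.inl e.2.1) ∨
              v = Sum.inr (Sum.inr e.2.2)), y v = 0 := by
          rcases hy with h | h | h
          · exact ⟨Sum.inl e.1, mem_filter.mpr ⟨mem_univ _, e, heM, Or.inl rfl⟩, h⟩
          · exact ⟨Sum.inr (Sum.inl e.2.1),
              mem_filter.mpr ⟨mem_univ _, e, heM, Or.inr (Or.inl rfl)⟩, h⟩
          · exact ⟨Sum.inr (Sum.inr e.2.2),
              mem_filter.mpr ⟨mem_univ _, e, heM, Or.inr (Or.inr rfl)⟩, h⟩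
        obtain ⟨v, hvmem, hv0⟩ := this
        rw [Finset.prod_eq_zero hvmem (by rw [hpow, if_pos hv0]), mul_zero]
  rw [Finset.sum_congr rfl (fun M _ => key M), Finset.sum_boole]
  have : univ.filter (fun M : Finset (Fin n × Fin n × Fin n) => M ⊆ S) = S.powerset := by
    ext M; simp [Finset.mem_powerset]
  rw [this, Finset.card_powerset]
end
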